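/- arXiv:2109.11780 — 3 statements merged into one kernel-verified Lean document; each statement's English description precedes it below -/
import Mathlib

section
/- For all 0 ≤ s ≤ t ≤ 1, ξ ∈ ℝ, r > 0 and ε ∈ [0,1], the variation γ_{s,t}(ξ,r) := γ_t(ξ,r) − γ_s(ξ,r) satisfies |γ_{s,t}(ξ,r)| ≤ C (|ξ|^ε |t−s|^ε + |t−s|) for a universal constant C. -/
open MeasureTheory

noncomputable def gammaH (t ξ r : ℝ) : ℂ :=
  Complex.exp (Complex.I * ξ * t) *
    ∫ s in (0:ℝ)..t, Complex.exp (-(s:ℂ) * (r:ℂ)^2) * Complex.exp (-Complex.I * ξ * s)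

/-!
Write `γ_t = e(t) I(t)` with the unimodular phase `e(t) = exp(iξt)` and `I(t) = ∫₀ᵗ f`, where
`‖f‖ ≤ 1` on `[0, ∞)`. Then `γ_t - γ_s = e(t) ∫ₛᵗ f + (e(t) - e(s)) I(s)`; the first term is at
most `t - s`, and `‖I(s)‖ ≤ s ≤ 1` while `‖e(t) - e(s)‖ ≤ min(2, |ξ| |t - s|) ≤ 2 (|ξ| |t - s|)^ε`.
-/

open Complex

lemma norm_exp_I_mul_ofReal_sub_one_le_two_mul_rpow (x : ℝ) {ε : ℝ} (hε₀ : 0 ≤ ε)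
    (hε₁ : ε ≤ 1) : ‖exp (I * x) - 1‖ ≤ 2 * |x| ^ ε := by
  rcases le_total |x| 1 with hx | hx
  · calc ‖exp (I * x) - 1‖ ≤ |x| := Real.norm_exp_I_mul_ofReal_sub_one_le
      _ = |x| ^ (1 : ℝ) := (Real.rpow_one _).symm
      _ ≤ |x| ^ ε := Real.rpow_le_rpow_of_exponent_ge' (abs_nonneg x) hx hε₀ hε₁
      _ ≤ 2 * |x| ^ ε := by linarith [Real.rpow_nonneg (abs_nonneg x) ε]
  · calc ‖exp (I * x) - 1‖ ≤ ‖exp (I * x)‖ + ‖(1 : ℂ)‖ := norm_sub_le _ _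
      _ = 2 * 1 := by rw [norm_exp_I_mul_ofReal, norm_one]; norm_num
      _ ≤ 2 * |x| ^ ε := by gcongr; exact Real.one_le_rpow hx hε₀

lemma norm_exp_I_mul_sub_exp_I_mul_le (ξ s t : ℝ) {ε : ℝ} (hε₀ : 0 ≤ ε) (hε₁ : ε ≤ 1) :
    ‖exp (I * ξ * t) - exp (I * ξ * s)‖ ≤ 2 * (|ξ| ^ ε * |t - s| ^ ε) := by
  have hfactor : exp (I * ξ * t) - exp (I * ξ * s) =
      exp (I * ξ * s) * (exp (I * ↑(ξ * (t - s))) - 1) := by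
    rw [mul_sub, mul_one, ← exp_add]
    push_cast
    ring_nf
  have hphase : ‖exp (I * ξ * s)‖ = 1 := by
    rw [mul_assoc, ← ofReal_mul, norm_exp_I_mul_ofReal]
  rw [hfactor, norm_mul, hphase, one_mul, ← Real.mul_rpow (abs_nonneg _) (abs_nonneg _),
    ← abs_mul]
  exact norm_exp_I_mul_ofReal_sub_one_le_two_mul_rpow _ hε₀ hε₁

lemma norm_exp_mul_sq_mul_exp_I_mul_le_one (ξ r : ℝ) {u : ℝ} (hu : 0 ≤ u) :
    ‖exp (-(u:ℂ) * (r:ℂ)^2) * exp (-I * ξ * u)‖ ≤ 1 := by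
  have hdecay : (-(u:ℂ) * (r:ℂ)^2).re = -(u * r^2) := by
    rw [← ofReal_pow, ← ofReal_neg, ← ofReal_mul, ofReal_re, neg_mul]
  rw [norm_mul, norm_exp, norm_exp, hdecay]
  simpa using mul_nonneg hu (sq_nonneg r)

lemma norm_integral_exp_mul_sq_mul_exp_I_mul_le (ξ r : ℝ) {a b : ℝ} (ha : 0 ≤ a)
    (hab : a ≤ b) :
    ‖∫ u in a..b, exp (-(u:ℂ) * (r:ℂ)^2) * exp (-I * ξ * u)‖ ≤ b - a := by
  have := intervalIntegral.norm_integral_le_of_norm_le_const (C := 1) (a := a) (b := b)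
    fun u hu => norm_exp_mul_sq_mul_exp_I_mul_le_one ξ r
      (ha.trans (Set.uIoc_of_le hab ▸ hu).1.le)
  rwa [one_mul, abs_of_nonneg (sub_nonneg.2 hab)] at this

lemma gammaH_sub_gammaH (s t ξ r : ℝ) :
    gammaH t ξ r - gammaH s ξ r =
      exp (I * ξ * t) * (∫ u in s..t, exp (-(u:ℂ) * (r:ℂ)^2) * exp (-I * ξ * u)) +
      (exp (I * ξ * t) - exp (I * ξ * s)) *
        ∫ u in (0:ℝ)..s, exp (-(u:ℂ) * (r:ℂ)^2) * exp (-I * ξ * u) := by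
  have hcont : Continuous fun u : ℝ => exp (-(u:ℂ) * (r:ℂ)^2) * exp (-I * ξ * u) := by
    fun_prop
  rw [← intervalIntegral.integral_interval_sub_left (hcont.intervalIntegrable 0 t)
    (hcont.intervalIntegrable 0 s), gammaH, gammaH]
  ring

theorem stmt1 :
    ∃ C : ℝ, 0 < C ∧ ∀ s t ξ r ε : ℝ, 0 ≤ s → s ≤ t → t ≤ 1 → 0 < r → 0 ≤ ε → ε ≤ 1 →
      ‖gammaH t ξ r - gammaH s ξ r‖ ≤
        C * (|ξ| ^ ε * |t - s| ^ ε + |t - s|) := by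
  refine ⟨2, two_pos, fun s t ξ r ε hs hst ht _ hε₀ hε₁ => ?_⟩
  have hts := (norm_integral_exp_mul_sq_mul_exp_I_mul_le ξ r hs hst).trans (le_abs_self _)
  have h0s := norm_integral_exp_mul_sq_mul_exp_I_mul_le ξ r le_rfl hs
  have hphase := norm_exp_I_mul_sub_exp_I_mul_le ξ s t hε₀ hε₁
  have hunit : ‖exp (I * ξ * t)‖ = 1 := by
    rw [mul_assoc, ← ofReal_mul, norm_exp_I_mul_ofReal]
  have hprod : 0 ≤ |ξ| ^ ε * |t - s| ^ ε := by positivity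
  rw [gammaH_sub_gammaH]
  calc _ ≤ _ := norm_add_le _ _
    _ ≤ |t - s| + 2 * (|ξ| ^ ε * |t - s| ^ ε) * 1 := by
        rw [norm_mul, norm_mul, hunit, one_mul]
        gcongr
        linarith
    _ ≤ 2 * (|ξ| ^ ε * |t - s| ^ ε + |t - s|) := by linarith [abs_nonneg (t - s)]
end

section
/- For all 0 ≤ s ≤ t ≤ 1, ξ ∈ ℝ with ξ ≠ 0, r > 0 and ε ∈ [0,1], one has |γ_{s,t}(ξ,r)| ≤ C (|t−s| r² / |ξ| + |t−s|^ε (1 + r²) / |ξ|^{1−ε}) for a universal constant C. -/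
open MeasureTheory

/-
With `z = r² + iξ` the integral is explicit: `γ_t = (e^{iξt} - e^{-tr²}) / z`, and `|z| ≥ |ξ|`.
So `|γ_t - γ_s| ≤ (|e^{iξ(t-s)} - 1| + |e^{-tr²} - e^{-sr²}|) / |ξ|`. The oscillatory term is at most
`min(2, |ξ||t-s|) ≤ 2 (|ξ||t-s|)^ε`, and the decay term is at most `|t-s| r²` because `exp` is
1-Lipschitz on `(-∞, 0]`.
-/

open Complex

lemma le_rpow_mul_rpow_of_le_of_le {a M x ε : ℝ} (ha : 0 ≤ a) (haM : a ≤ M) (hax : a ≤ x)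
    (hε₀ : 0 ≤ ε) (hε₁ : ε ≤ 1) : a ≤ M ^ (1 - ε) * x ^ ε :=
  calc a = a ^ (1 - ε) * a ^ ε := by
        rw [← Real.rpow_add' ha (by norm_num), sub_add_cancel, Real.rpow_one]
    _ ≤ M ^ (1 - ε) * x ^ ε := by
        have hM : 0 ≤ M := ha.trans haM
        gcongr

lemma norm_exp_I_mul_ofReal_sub_one_le_rpow (x : ℝ) {ε : ℝ} (hε₀ : 0 ≤ ε) (hε₁ : ε ≤ 1) :
    ‖cexp (I * x) - 1‖ ≤ 2 * |x| ^ ε := by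
  have h_two : ‖cexp (I * x) - 1‖ ≤ 2 :=
    (norm_sub_le _ _).trans (by rw [norm_exp_I_mul_ofReal, norm_one]; norm_num)
  have h_lin : ‖cexp (I * x) - 1‖ ≤ |x| := Real.norm_exp_I_mul_ofReal_sub_one_le
  calc ‖cexp (I * x) - 1‖ ≤ 2 ^ (1 - ε) * |x| ^ ε :=
        le_rpow_mul_rpow_of_le_of_le (norm_nonneg _) h_two h_lin hε₀ hε₁
    _ ≤ 2 ^ (1 : ℝ) * |x| ^ ε := by
        gcongr
        · norm_num
        · linarith
    _ = 2 * |x| ^ ε := by rw [Real.rpow_one]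

lemma abs_exp_sub_exp_le_of_nonpos {a b : ℝ} (ha : a ≤ 0) (hb : b ≤ 0) :
    |Real.exp a - Real.exp b| ≤ |a - b| := by
  simpa only [one_mul, Real.norm_eq_abs] using
    (convex_Iic 0).norm_image_sub_le_of_norm_deriv_le (f := Real.exp) (C := 1)
    (fun x _ => Real.differentiableAt_exp)
    (fun x hx => by
      rw [Real.deriv_exp, Real.norm_of_nonneg (Real.exp_pos x).le]
      exact Real.exp_le_one_iff.mpr hx) hb ha

lemma gammaH_eq_div {ξ : ℝ} (hξ : ξ ≠ 0) (t r : ℝ) :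
    gammaH t ξ r = (cexp (I * ξ * t) - Real.exp (-(t * r ^ 2))) / (r ^ 2 + I * ξ) := by
  set z : ℂ := r ^ 2 + I * ξ with hz_def
  have hz : z ≠ 0 := fun h => hξ <| by simpa [z, ← ofReal_pow] using congrArg im h
  have h_integrand : ∀ s : ℝ, cexp (-(s:ℂ) * (r:ℂ)^2) * cexp (-I * ξ * s) = cexp (-z * s) := by
    intro s
    rw [← Complex.exp_add, hz_def]
    ring_nf
  have h_exp : cexp (I * ξ * t) * cexp (-z * t) = cexp (-(t * r ^ 2)) := by
    rw [← Complex.exp_add, hz_def]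
    ring_nf
  rw [gammaH, intervalIntegral.integral_congr (fun s _ => h_integrand s),
    integral_exp_mul_complex (neg_ne_zero.mpr hz), ofReal_exp]
  push_cast
  rw [mul_zero, Complex.exp_zero, div_neg, mul_neg, mul_div_assoc', ← neg_div, mul_sub, h_exp,
    mul_one, neg_sub]

lemma norm_gammaH_sub_le {ξ : ℝ} (hξ : ξ ≠ 0) (s t r : ℝ) :
    ‖gammaH t ξ r - gammaH s ξ r‖ ≤
      (‖cexp (I * ↑(ξ * (t - s))) - 1‖ + |Real.exp (-(t * r ^ 2)) - Real.exp (-(s * r ^ 2))|) /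
        |ξ| := by
  have h_im : |ξ| ≤ ‖(r:ℂ) ^ 2 + I * ξ‖ :=
    calc |ξ| = |((r:ℂ) ^ 2 + I * ξ).im| := by simp [← ofReal_pow]
      _ ≤ _ := abs_im_le_norm _
  have h_phase : cexp (I * ξ * t) - cexp (I * ξ * s) =
      cexp (I * ξ * s) * (cexp (I * ↑(ξ * (t - s))) - 1) := by
    rw [mul_sub, mul_one, ← Complex.exp_add]
    push_cast
    ring_nf
  have h_num : ‖cexp (I * ξ * t) - Real.exp (-(t * r ^ 2)) -
      (cexp (I * ξ * s) - Real.exp (-(s * r ^ 2)))‖ ≤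
      ‖cexp (I * ↑(ξ * (t - s))) - 1‖ + |Real.exp (-(t * r ^ 2)) - Real.exp (-(s * r ^ 2))| := by
    calc _ = ‖(cexp (I * ξ * t) - cexp (I * ξ * s)) -
          ↑(Real.exp (-(t * r ^ 2)) - Real.exp (-(s * r ^ 2)))‖ := by push_cast; ring_nf
      _ ≤ _ := by
        refine (norm_sub_le _ _).trans_eq ?_
        rw [h_phase, norm_mul, norm_real, Real.norm_eq_abs]
        simp [Complex.norm_exp]
  rw [gammaH_eq_div hξ, gammaH_eq_div hξ, div_sub_div_same, norm_div]
  exact div_le_div₀ (by positivity) h_num (abs_pos.mpr hξ) h_im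

theorem stmt2 :
    ∃ C : ℝ, 0 < C ∧ ∀ s t ξ r ε : ℝ, 0 ≤ s → s ≤ t → t ≤ 1 → ξ ≠ 0 → 0 < r → 0 ≤ ε → ε ≤ 1 →
      ‖gammaH t ξ r - gammaH s ξ r‖ ≤
        C * (|t - s| * r^2 / |ξ| + |t - s| ^ ε * (1 + r^2) / |ξ| ^ (1 - ε)) := by
  refine ⟨2, two_pos, fun s t ξ r ε hs hst _ hξ _ hε₀ hε₁ => ?_⟩
  have hξ_pos : 0 < |ξ| := abs_pos.mpr hξ
  have h_phase := norm_exp_I_mul_ofReal_sub_one_le_rpow (ξ * (t - s)) hε₀ hε₁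
  have h_decay : |Real.exp (-(t * r ^ 2)) - Real.exp (-(s * r ^ 2))| ≤ |t - s| * r ^ 2 :=
    calc _ ≤ |-(t * r ^ 2) - -(s * r ^ 2)| :=
          abs_exp_sub_exp_le_of_nonpos (neg_nonpos.mpr (mul_nonneg (hs.trans hst) (sq_nonneg r)))
            (neg_nonpos.mpr (mul_nonneg hs (sq_nonneg r)))
      _ = |t - s| * r ^ 2 := by
          rw [show -(t * r ^ 2) - -(s * r ^ 2) = -((t - s) * r ^ 2) by ring, abs_neg, abs_mul,
            abs_of_nonneg (sq_nonneg r)]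
  have h_weight : |t - s| ^ ε / |ξ| ^ (1 - ε) ≤ |t - s| ^ ε * (1 + r ^ 2) / |ξ| ^ (1 - ε) := by
    gcongr
    exact le_mul_of_one_le_right (by positivity) (by nlinarith [sq_nonneg r])
  calc _ ≤ (2 * |ξ * (t - s)| ^ ε + |t - s| * r ^ 2) / |ξ| :=
        (norm_gammaH_sub_le hξ s t r).trans (by gcongr)
    _ = 2 * (|t - s| ^ ε / |ξ| ^ (1 - ε)) + |t - s| * r ^ 2 / |ξ| := by
        rw [abs_mul, Real.mul_rpow hξ_pos.le (abs_nonneg _), Real.rpow_sub hξ_pos, Real.rpow_one]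
        field_simp
    _ ≤ _ := by
        have : 0 ≤ |t - s| * r ^ 2 / |ξ| := by positivity
        linarith
end

section
/- Let H₀ ∈ (0,1), n ≥ 1, t > 0 and 1 ≤ r ≤ 2ⁿ. Define Γ^{H₀,n}_t(r) := ∫_{−4ⁿ}^{4ⁿ} |γ_t(ξ,r)|² / |ξ|^{2H₀−1} dξ, where |γ_t(ξ,r)|² = (1 − 2cos(ξt)e^{−r²t} + e^{−2r²t})/(r⁴+ξ²). Then Γ^{H₀,n}_t(r) ≥ c · (1/r^{4H₀}) (1 − 2e^{−t} + e^{−2t}) > 0, where c > 0 depends only on H₀. -/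
open MeasureTheory

/-!
The integrand is explicit: `γ_t(ξ, r) = e^{iξt} (e^{zt} - 1) / z` with `z = -r² - iξ`, so
`|γ_t(ξ, r)|² ≥ (1 - e^{-t})² / (r⁴ + ξ²)` as soon as `r ≥ 1`. On `|ξ| ≤ r² ≤ 4ⁿ` the denominator
is at most `2 r⁴`, and `∫_{-r²}^{r²} |ξ|^{1-2H₀} dξ = r^{4-4H₀} / (1 - H₀)`, which gives the bound
with `c = 1 / (2 (1 - H₀))`.
-/

lemma intervalIntegrable_abs_rpow {p : ℝ} (hp : -1 < p) (a b : ℝ) :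
    IntervalIntegrable (fun x : ℝ => |x| ^ p) volume a b :=
  intervalIntegrable_of_even (fun x => by rw [abs_neg]) fun x hx =>
    (intervalIntegral.intervalIntegrable_rpow' hp).congr fun y hy => by
      rw [Set.uIoc_of_le hx.le] at hy
      simp only [abs_of_pos hy.1]

lemma integral_abs_rpow {p : ℝ} (hp : -1 < p) {a : ℝ} (ha : 0 ≤ a) :
    ∫ x in (-a)..a, |x| ^ p = 2 * (a ^ (p + 1) / (p + 1)) := by
  have h_right : ∫ x in (0:ℝ)..a, |x| ^ p = a ^ (p + 1) / (p + 1) := by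
    rw [intervalIntegral.integral_congr (g := fun x : ℝ => x ^ p) fun x hx => by
        rw [Set.uIcc_of_le ha] at hx
        simp only [abs_of_nonneg hx.1],
      integral_rpow (Or.inl hp), Real.zero_rpow (by linarith), sub_zero]
  have h_left : ∫ x in (-a)..(0:ℝ), |x| ^ p = a ^ (p + 1) / (p + 1) := by
    simpa only [abs_neg, neg_zero, h_right] using
      (intervalIntegral.integral_comp_neg (a := 0) (b := a) fun x : ℝ => |x| ^ p).symm
  rw [← intervalIntegral.integral_add_adjacent_intervals
      (intervalIntegrable_abs_rpow hp (-a) 0) (intervalIntegrable_abs_rpow hp 0 a),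
    h_left, h_right, two_mul]

lemma one_sub_exp_neg_le_norm_cexp_sub_one {z : ℂ} (hz : z.re ≤ -1) {t : ℝ} (ht : 0 ≤ t) :
    1 - Real.exp (-t) ≤ ‖Complex.exp (z * t) - 1‖ := by
  have h_norm : ‖Complex.exp (z * t)‖ ≤ Real.exp (-t) := by
    rw [Complex.norm_exp, Complex.re_mul_ofReal]
    exact Real.exp_le_exp.2 (by nlinarith)
  have h_triangle := norm_sub_norm_le (1 : ℂ) (Complex.exp (z * t))
  rw [norm_one, norm_sub_rev] at h_triangle
  linarith

section GammaH

variable {t r : ℝ}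

lemma gammaH_eq (hr : r ≠ 0) (ξ : ℝ) :
    gammaH t ξ r = Complex.exp (Complex.I * ξ * t) *
      ((Complex.exp ((-(r:ℂ)^2 - Complex.I * ξ) * t) - 1) / (-(r:ℂ)^2 - Complex.I * ξ)) := by
  have hz : -(r:ℂ)^2 - Complex.I * ξ ≠ 0 := fun h => by
    simpa [← Complex.ofReal_pow, hr] using congrArg Complex.re h
  rw [gammaH, intervalIntegral.integral_congr (g := fun s : ℝ =>
      Complex.exp ((-(r:ℂ)^2 - Complex.I * ξ) * s)) fun s _ => by
        simp only [← Complex.exp_add]; ring_nf,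
    integral_exp_mul_complex hz, Complex.ofReal_zero, mul_zero, Complex.exp_zero]

lemma norm_gammaH_sq (hr : r ≠ 0) (ξ : ℝ) :
    ‖gammaH t ξ r‖ ^ 2 =
      ‖Complex.exp ((-(r:ℂ)^2 - Complex.I * ξ) * t) - 1‖ ^ 2 / (r^4 + ξ^2) := by
  have h_phase : ‖Complex.exp (Complex.I * ξ * t)‖ = 1 := by
    rw [Complex.norm_exp]; simp
  have h_denom : ‖-(r:ℂ)^2 - Complex.I * ξ‖ ^ 2 = r^4 + ξ^2 := by
    rw [Complex.sq_norm, Complex.normSq_apply]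
    simp only [Complex.sub_re, Complex.neg_re, Complex.sub_im, Complex.neg_im,
      Complex.mul_re, Complex.mul_im, Complex.I_re, Complex.I_im, Complex.ofReal_re,
      Complex.ofReal_im, ← Complex.ofReal_pow]
    ring
  rw [gammaH_eq hr, norm_mul, norm_div, h_phase, one_mul, div_pow, h_denom]

lemma continuous_norm_gammaH_sq (hr : r ≠ 0) : Continuous fun ξ : ℝ => ‖gammaH t ξ r‖ ^ 2 := by
  simp_rw [norm_gammaH_sq hr]
  exact (by fun_prop : Continuous _).div (by fun_prop) fun ξ => by positivity

lemma sq_one_sub_exp_neg_div_le_norm_gammaH_sq (ht : 0 ≤ t) (hr : 1 ≤ r) (ξ : ℝ) :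
    (1 - Real.exp (-t)) ^ 2 / (r^4 + ξ^2) ≤ ‖gammaH t ξ r‖ ^ 2 := by
  have hre : (-(r:ℂ)^2 - Complex.I * ξ).re ≤ -1 := by
    simp only [Complex.sub_re, Complex.neg_re, Complex.mul_re, Complex.I_re, Complex.I_im,
      Complex.ofReal_re, Complex.ofReal_im, ← Complex.ofReal_pow]
    nlinarith
  have h_gap : 0 ≤ 1 - Real.exp (-t) := sub_nonneg.2 (Real.exp_le_one_iff.2 (by linarith))
  rw [norm_gammaH_sq (by positivity)]
  gcongr
  exact one_sub_exp_neg_le_norm_cexp_sub_one hre ht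

lemma intervalIntegrable_norm_gammaH_sq_mul_abs_rpow (hr : r ≠ 0) {p : ℝ} (hp : -1 < p)
    (a b : ℝ) :
    IntervalIntegrable (fun ξ => ‖gammaH t ξ r‖ ^ 2 * |ξ| ^ p) volume a b :=
  (intervalIntegrable_abs_rpow hp a b).continuousOn_mul
    (continuous_norm_gammaH_sq hr).continuousOn

lemma integral_norm_gammaH_sq_mul_abs_rpow_ge (ht : 0 ≤ t) (hr : 1 ≤ r) {p : ℝ} (hp : -1 < p)
    {A : ℝ} (hA : r^2 ≤ A) :
    (1 - Real.exp (-t)) ^ 2 * (r^2) ^ (p + 1) / (r^4 * (p + 1)) ≤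
      ∫ ξ in (-A)..A, ‖gammaH t ξ r‖ ^ 2 * |ξ| ^ p := by
  have hr0 : r ≠ 0 := by positivity
  have hr2 : 0 ≤ r^2 := by positivity
  have hp1 : p + 1 ≠ 0 := by linarith
  calc (1 - Real.exp (-t)) ^ 2 * (r^2) ^ (p + 1) / (r^4 * (p + 1))
      = ∫ ξ in (-r^2)..(r^2), (1 - Real.exp (-t)) ^ 2 / (2 * r^4) * |ξ| ^ p := by
        rw [intervalIntegral.integral_const_mul, integral_abs_rpow hp hr2]
        field_simp
    _ ≤ ∫ ξ in (-r^2)..(r^2), ‖gammaH t ξ r‖ ^ 2 * |ξ| ^ p := by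
        refine intervalIntegral.integral_mono_on (by linarith)
          ((intervalIntegrable_abs_rpow hp _ _).const_mul _)
          (intervalIntegrable_norm_gammaH_sq_mul_abs_rpow hr0 hp _ _) fun ξ hξ => ?_
        have hξ2 : ξ^2 ≤ r^4 := by nlinarith [hξ.1, hξ.2]
        gcongr
        calc (1 - Real.exp (-t)) ^ 2 / (2 * r^4)
            ≤ (1 - Real.exp (-t)) ^ 2 / (r^4 + ξ^2) := by gcongr; linarith
          _ ≤ ‖gammaH t ξ r‖ ^ 2 := sq_one_sub_exp_neg_div_le_norm_gammaH_sq ht hr ξ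
    _ ≤ ∫ ξ in (-A)..A, ‖gammaH t ξ r‖ ^ 2 * |ξ| ^ p :=
        intervalIntegral.integral_mono_interval (by linarith) (by linarith) hA
          (Filter.Eventually.of_forall fun ξ => by positivity)
          (intervalIntegrable_norm_gammaH_sq_mul_abs_rpow hr0 hp _ _)

end GammaH

theorem stmt17 (H₀ : ℝ) (hH : H₀ ∈ Set.Ioo (0:ℝ) 1) :
    ∃ c : ℝ, 0 < c ∧ ∀ n : ℕ, 1 ≤ n → ∀ t : ℝ, 0 < t → ∀ r : ℝ, 1 ≤ r → r ≤ (2:ℝ)^n →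
      (c * (1 / r ^ (4*H₀)) * (1 - 2*Real.exp (-t) + Real.exp (-2*t)) ≤
        ∫ ξ in (-(4:ℝ)^n)..((4:ℝ)^n), ‖gammaH t ξ r‖^2 / |ξ| ^ (2*H₀ - 1))
      ∧ 0 < c * (1 / r ^ (4*H₀)) * (1 - 2*Real.exp (-t) + Real.exp (-2*t)) := by
  have hH₁ : 0 < 1 - H₀ := sub_pos.2 hH.2
  refine ⟨1 / (2 * (1 - H₀)), by positivity, fun n _ t ht r hr hrn => ?_⟩
  have hr0 : 0 < r := by linarith
  have h_sq : 1 - 2*Real.exp (-t) + Real.exp (-2*t) = (1 - Real.exp (-t)) ^ 2 := by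
    rw [show -2*t = -t + -t by ring, Real.exp_add]; ring
  have h_weight : (r^2) ^ (1 - 2*H₀ + 1) / (r^4 * (1 - 2*H₀ + 1)) =
      1 / (2 * (1 - H₀)) * (1 / r ^ (4*H₀)) := by
    rw [← Real.rpow_natCast_mul hr0.le, show ((2:ℕ):ℝ) * (1 - 2*H₀ + 1) = 4 - 4*H₀ by
      push_cast; ring, Real.rpow_sub hr0, show (4:ℝ) = ((4:ℕ):ℝ) by norm_num,
      Real.rpow_natCast, show 1 - 2*H₀ + 1 = 2 * (1 - H₀) by ring]
    field_simp
  have h_range : r^2 ≤ (4:ℝ)^n := by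
    calc r^2 ≤ ((2:ℝ)^n)^2 := by gcongr
      _ = (4:ℝ)^n := by rw [← pow_mul, mul_comm, pow_mul]; norm_num
  have h_gap : 0 < 1 - Real.exp (-t) := sub_pos.2 (Real.exp_lt_one_iff.2 (by linarith))
  rw [h_sq]
  refine ⟨?_, by positivity⟩
  calc 1 / (2 * (1 - H₀)) * (1 / r ^ (4*H₀)) * (1 - Real.exp (-t)) ^ 2
      = (1 - Real.exp (-t)) ^ 2 * (r^2) ^ (1 - 2*H₀ + 1) / (r^4 * (1 - 2*H₀ + 1)) := by
        rw [mul_div_assoc, h_weight, mul_comm]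
    _ ≤ ∫ ξ in (-(4:ℝ)^n)..((4:ℝ)^n), ‖gammaH t ξ r‖ ^ 2 * |ξ| ^ (1 - 2*H₀) :=
        integral_norm_gammaH_sq_mul_abs_rpow_ge ht.le hr (by linarith) h_range
    _ = ∫ ξ in (-(4:ℝ)^n)..((4:ℝ)^n), ‖gammaH t ξ r‖ ^ 2 / |ξ| ^ (2*H₀ - 1) := by
        simp_rw [div_eq_mul_inv, ← Real.rpow_neg (abs_nonneg _), neg_sub]
end
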